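/- arXiv:1809.02483 — 6 statements merged into one kernel-verified Lean document; each statement's English description precedes it below -/
import Mathlib

section
/- Let (K, ν, Γ) be a valued field, γ ∈ Γ with γ ≥ 0, and a, b ∈ K not both zero. Then 0 belongs to the sumset {x + y : x ∈ a(1+m^γ), y ∈ b(1+m^γ)} if and only if this sumset equals m^{γ + min(ν(a), ν(b))} = {x ∈ K : ν(x) > γ + min(ν(a), ν(b))}. -/
open Multiplicative WithZero Filter

noncomputable section

/-- The multiplicative value group `ℚₘ₀` used for normalized valuations:
`expQ q` corresponds to the additive value `q`. -/
abbrev QM0 : Type := WithZero (Multiplicative ℚ)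

/-- `expQ q` is the element of `ℚₘ₀` corresponding to the additive value `q`
(so that `v x = expQ q` means `ν(x) = q` additively). -/
def expQ (q : ℚ) : QM0 := ((Multiplicative.ofAdd (-q) : Multiplicative ℚ) : QM0)

section Hyper

variable {K : Type*} [Field K] {Γ₀ : Type*} [LinearOrderedCommGroupWithZero Γ₀]

/-- `hrel v γ a b` says that `b` belongs to the coset `a·(1+𝔪^γ)`,
where `𝔪^γ = {x : ν(x) > γ}` (multiplicatively: `v x < γ`). -/
def hrel (v : Valuation K Γ₀) (γ : Γ₀) (a b : K) : Prop :=
  ∃ u : K, v (u - 1) < γ ∧ b = a * u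

/-- The coset `a·(1+𝔪^γ)` as a subset of `K`. -/
def coset (v : Valuation K Γ₀) (γ : Γ₀) (a : K) : Set K := {b | hrel v γ a b}

/-- `hsumMem v γ a b c` says `[c] ∈ [a] + [b]` in the valued hyperfield `H_γ(K)`. -/
def hsumMem (v : Valuation K Γ₀) (γ : Γ₀) (a b c : K) : Prop :=
  ∃ x y : K, hrel v γ a x ∧ hrel v γ b y ∧ hrel v γ (x + y) c

/-- The valued hyperfield `H_γ(K) = K/(1+𝔪^γ)`. -/
def Hyp (v : Valuation K Γ₀) (γ : Γ₀) : Type _ := Quot (hrel v γ)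

/-- The class `[a]_γ ∈ H_γ(K)`. -/
def hmk (v : Valuation K Γ₀) (γ : Γ₀) (a : K) : Hyp v γ := Quot.mk _ a

end Hyper

section HypHom

variable {K₁ K₂ : Type*} [Field K₁] [Field K₂]
variable {Γ₁ Γ₂ : Type*} [LinearOrderedCommGroupWithZero Γ₁] [LinearOrderedCommGroupWithZero Γ₂]

/-- A homomorphism of valued hyperfields `H_γ(K₁) → H_δ(K₂)`:
`f([0]) = [0]`, `f([1]) = [1]`, `f` is multiplicative, `f(α + β) ⊆ f(α) + f(β)`
and `ν(α) ≤ ν(β) ↔ ν(f α) ≤ ν(f β)` (stated here multiplicatively). -/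
structure HypHom (v₁ : Valuation K₁ Γ₁) (γ : Γ₁) (v₂ : Valuation K₂ Γ₂) (δ : Γ₂) where
  toFun : Hyp v₁ γ → Hyp v₂ δ
  map_zero' : toFun (hmk v₁ γ 0) = hmk v₂ δ 0
  map_one' : toFun (hmk v₁ γ 1) = hmk v₂ δ 1
  map_mul' : ∀ (a b : K₁) (a' b' : K₂), toFun (hmk v₁ γ a) = hmk v₂ δ a' →
    toFun (hmk v₁ γ b) = hmk v₂ δ b' → toFun (hmk v₁ γ (a * b)) = hmk v₂ δ (a' * b')
  map_hsum' : ∀ (a b c : K₁) (a' b' c' : K₂), toFun (hmk v₁ γ a) = hmk v₂ δ a' →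
    toFun (hmk v₁ γ b) = hmk v₂ δ b' → toFun (hmk v₁ γ c) = hmk v₂ δ c' →
    hsumMem v₁ γ a b c → hsumMem v₂ δ a' b' c'
  val_le_iff' : ∀ (a b : K₁) (a' b' : K₂), toFun (hmk v₁ γ a) = hmk v₂ δ a' →
    toFun (hmk v₁ γ b) = hmk v₂ δ b' → (v₁ a ≤ v₁ b ↔ v₂ a' ≤ v₂ b')

/-- A homomorphism of valued hyperfields is *over `p`* if `f([p]) = [p]`. -/
def HypHom.OverP {v₁ : Valuation K₁ Γ₁} {γ : Γ₁} {v₂ : Valuation K₂ Γ₂} {δ : Γ₂}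
    (p : ℕ) (f : HypHom v₁ γ v₂ δ) : Prop :=
  f.toFun (hmk v₁ γ (p : K₁)) = hmk v₂ δ (p : K₂)

end HypHom

section CDVF

variable (K : Type*) [Field K] [Valued K QM0]

/-- `K` is a complete discrete valued field of mixed characteristic `(0,p)` with
perfect residue field and ramification index `e`, with the valuation normalized so
that `ν(p) = 1` and `ν(K^×) = (1/e)ℤ`.  Perfectness of the residue field is expressed
as surjectivity of the Frobenius on residues. -/
structure IsCompleteDVF (p e : ℕ) : Prop where
  prime : p.Prime
  charZero : CharZero K
  complete : CompleteSpace K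
  epos : 0 < e
  v_p : Valued.v (p : K) = expQ 1
  discrete : ∀ x : K, x ≠ 0 → ∃ k : ℤ, Valued.v x = expQ ((k : ℚ) / e)
  exists_unif : ∃ π : K, Valued.v π = expQ (1 / e)
  perfectResidue : ∀ x : K, Valued.v x ≤ 1 → ∃ y : K, Valued.v y ≤ 1 ∧ Valued.v (x - y ^ p) < 1

/-- The cut-off value for the `n`-th valued hyperfield `H_n(K) = K/(1+𝔪^n)`:
`𝔪^n = {x : ν(x) > (n-1)/e}` when the ramification index is `e` and `ν(p) = 1`. -/
def hnγ (e n : ℕ) : QM0 := expQ (((n : ℚ) - 1) / e)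

/-- The set of Teichmüller representatives: elements of the valuation ring which are
`p^s`-th powers in the valuation ring for every `s`. -/
def Teich (p : ℕ) : Set K :=
  {a | Valued.v a ≤ 1 ∧ ∀ s : ℕ, ∃ b : K, Valued.v b ≤ 1 ∧ b ^ p ^ s = a}

/-- The Witt subring of `K`: the set of (convergent) sums `Σ s_k p^k` with all
`s_k` Teichmüller representatives. -/
def WittPart (p : ℕ) : Set K :=
  {x | ∃ s : ℕ → K, (∀ k, s k ∈ Teich K p) ∧
    Tendsto (fun n => ∑ k ∈ Finset.range n, s k * (p : K) ^ k) atTop (nhds x)}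

end CDVF

/-- The preimage in `K` of the hypersum `[a] + [b]` in `H_γ(K)`. -/
def cosetSum {K : Type*} [Field K] {Γ₀ : Type*} [LinearOrderedCommGroupWithZero Γ₀]
    (v : Valuation K Γ₀) (γ : Γ₀) (a b : K) : Set K :=
  {z : K | ∃ x ∈ coset v γ a, ∃ y ∈ coset v γ b, z = x + y}

section CosetSum

variable {K : Type*} [Field K] {Γ₀ : Type*} [LinearOrderedCommGroupWithZero Γ₀]
  (v : Valuation K Γ₀) {γ : Γ₀}

theorem Valuation.map_eq_one_of_map_sub_one_lt_one {u : K} (hu : v (u - 1) < 1) : v u = 1 := by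
  simpa using v.map_one_add_of_lt hu

theorem Valuation.map_sub_lt_of_map_sub_one_lt {u u' : K} (hu : v (u - 1) < γ)
    (hu' : v (u' - 1) < γ) : v (u' - u) < γ := by
  rw [show u' - u = (u' - 1) - (u - 1) by ring]
  exact (v.map_sub _ _).trans_lt (max_lt hu' hu)

theorem mem_coset_iff_of_map_sub_one_lt {a u x : K} (hu : v (u - 1) < γ) :
    x ∈ coset v γ a ↔ ∃ t, v t < γ ∧ x = a * u + a * t := by
  constructor
  · rintro ⟨u', hu', rfl⟩
    exact ⟨u' - u, v.map_sub_lt_of_map_sub_one_lt hu hu', by ring⟩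
  · rintro ⟨t, ht, rfl⟩
    refine ⟨u + t, ?_, by ring⟩
    rw [show u + t - 1 = (u - 1) + t by ring]
    exact (v.map_add _ _).trans_lt (max_lt hu ht)

theorem Valuation.map_eq_of_mul_add_mul_eq_zero {a b u w : K} (hu : v (u - 1) < 1)
    (hw : v (w - 1) < 1) (h : a * u + b * w = 0) : v a = v b := by
  have hvu := v.map_eq_one_of_map_sub_one_lt_one hu
  have hvw := v.map_eq_one_of_map_sub_one_lt_one hw
  simpa [hvu, hvw] using congrArg v (eq_neg_of_add_eq_zero_left h)

/-- Once `0 = a * u + b * w` lies in the sumset, translating by it turns the sumset into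
`a𝔪^γ + b𝔪^γ`, which is the ball `a𝔪^γ` as `ν(a) = ν(b)`. -/
theorem cosetSum_eq_of_mul_add_mul_eq_zero {a b u w : K} (ha : a ≠ 0) (hab : v a = v b)
    (hu : v (u - 1) < γ) (hw : v (w - 1) < γ) (h : a * u + b * w = 0) :
    cosetSum v γ a b = {z : K | v z < γ * v a} := by
  have hva : 0 < v a := zero_lt_iff.2 (v.ne_zero_iff.2 ha)
  ext z
  constructor
  · rintro ⟨x, hx, y, hy, rfl⟩
    obtain ⟨t, ht, rfl⟩ := (mem_coset_iff_of_map_sub_one_lt v hu).1 hx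
    obtain ⟨s, hs, rfl⟩ := (mem_coset_iff_of_map_sub_one_lt v hw).1 hy
    rw [Set.mem_ofPred_eq,
      show a * u + a * t + (b * w + b * s) = a * t + b * s by linear_combination h]
    refine (v.map_add _ _).trans_lt (max_lt ?_ ?_)
    · rw [v.map_mul, mul_comm (v a)]
      exact mul_lt_mul_of_pos_right ht hva
    · rw [v.map_mul, ← hab, mul_comm (v a)]
      exact mul_lt_mul_of_pos_right hs hva
  · intro hz
    refine ⟨_, (mem_coset_iff_of_map_sub_one_lt v hu).2 ⟨z / a, ?_, rfl⟩, _, ⟨w, hw, rfl⟩, ?_⟩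
    · rwa [v.map_div, div_lt_iff₀ hva]
    · field_simp
      linear_combination -h

end CosetSum

/-- For a valued field `(K, ν, Γ)`, `γ ∈ Γ` with `γ ≥ 0`, and `a, b ∈ K`
not both zero: `0` belongs to the sumset `{x + y : x ∈ a(1+𝔪^γ), y ∈ b(1+𝔪^γ)}` if and
only if this sumset equals `𝔪^{γ + min(ν a, ν b)} = {x : ν(x) > γ + min(ν a, ν b)}`. -/
theorem statement1 {K : Type*} [Field K] {Γ₀ : Type*} [LinearOrderedCommGroupWithZero Γ₀]
    (v : Valuation K Γ₀) (γ : Γ₀) (hγ_le : γ ≤ 1) (hγ_mem : ∃ x : K, x ≠ 0 ∧ v x = γ)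
    (a b : K) (hab : ¬(a = 0 ∧ b = 0)) :
    (0 : K) ∈ {z : K | ∃ x ∈ coset v γ a, ∃ y ∈ coset v γ b, z = x + y} ↔
      {z : K | ∃ x ∈ coset v γ a, ∃ y ∈ coset v γ b, z = x + y} =
        {z : K | v z < γ * max (v a) (v b)} := by
  change 0 ∈ cosetSum v γ a b ↔ cosetSum v γ a b = _
  constructor
  · rintro ⟨_, ⟨u, hu, rfl⟩, _, ⟨w, hw, rfl⟩, h⟩
    have hvab := v.map_eq_of_mul_add_mul_eq_zero (hu.trans_le hγ_le) (hw.trans_le hγ_le) h.symm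
    have ha : a ≠ 0 := fun ha => hab ⟨ha, v.zero_iff.1 (by rw [← hvab, ha, map_zero])⟩
    rw [cosetSum_eq_of_mul_add_mul_eq_zero v ha hvab hu hw h.symm, ← hvab, max_self]
  · intro h
    obtain ⟨x, hx, rfl⟩ := hγ_mem
    rw [h, Set.mem_ofPred_eq, map_zero, zero_lt_iff]
    refine mul_ne_zero (v.ne_zero_iff.2 hx) ?_
    simpa [not_and_or] using hab
end
end

section
/- Let K₁ and K₂ be valued fields whose residue fields have characteristic p > 0, let γ ∈ (Γ₁)_{≥0}, λ ∈ (Γ₂)_{≥0}, and let f : H_γ(K₁) → H_λ(K₂) be a homomorphism of valued hyperfields which is over p. Then f([n]) = [n] for every integer n (where n denotes the image of n under the canonical map ℤ → K_i). -/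
open Multiplicative WithZero Filter

noncomputable section

section Statement3Aux

variable {K : Type*} [Field K] {Γ₀ : Type*} [LinearOrderedCommGroupWithZero Γ₀]

lemma aux_v_nat_le_one (v : Valuation K Γ₀) (n : ℕ) : v (n : K) ≤ 1 := by
  induction n with
  | zero => simp
  | succ n ih =>
    push_cast
    exact (v.map_add _ _).trans (max_le ih (le_of_eq v.map_one))

lemma aux_v_int_le_one (v : Valuation K Γ₀) (n : ℤ) : v (n : K) ≤ 1 := by
  rcases Int.eq_nat_or_neg n with ⟨m, rfl | rfl⟩
  · push_cast; exact aux_v_nat_le_one v m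
  · push_cast; rw [v.map_neg]; exact aux_v_nat_le_one v m

/-- If `v (u - 1) < δ ≤ 1` then `v u = 1`. -/
lemma aux_v_unit (v : Valuation K Γ₀) {δ : Γ₀} (hδ : δ ≤ 1) {u : K}
    (hu : v (u - 1) < δ) : v u = 1 := by
  have h1 : v (u - 1) < v 1 := by rw [v.map_one]; exact lt_of_lt_of_le hu hδ
  have h2 := v.map_add_eq_of_lt_right (x := u - 1) (y := 1) h1
  simpa using h2

lemma aux_hrel_refl (v : Valuation K Γ₀) {γ : Γ₀} (hγ : γ ≠ 0) (a : K) :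
    hrel v γ a a :=
  ⟨1, by simpa using zero_lt_iff.2 hγ, by ring⟩

/-- If `p ∤ m` then `v m = 1` (residue characteristic `p`). -/
lemma aux_v_coprime (v : Valuation K Γ₀) {p : ℕ} (hp : p.Prime)
    (hvp : v (p : K) < 1) {m : ℕ} (hm : ¬ p ∣ m) : v (m : K) = 1 := by
  have hle : v (m : K) ≤ 1 := aux_v_nat_le_one v m
  rcases lt_or_eq_of_le hle with hlt | heq
  · exfalso
    have hcop : Nat.Coprime p m := (Nat.Prime.coprime_iff_not_dvd hp).2 hm
    have hcop' : IsCoprime (p : ℤ) (m : ℤ) := Int.isCoprime_iff_gcd_eq_one.2 (by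
      simpa [Int.gcd_natCast_natCast] using hcop)
    obtain ⟨a, b, hab⟩ := hcop'
    have hK : (a : K) * (p : K) + (b : K) * (m : K) = 1 := by
      have h := congrArg (fun z : ℤ => (z : K)) hab
      push_cast at h
      exact h
    have h1 : (1 : Γ₀) ≤ max (v ((a : K) * p)) (v ((b : K) * m)) := by
      calc (1 : Γ₀) = v (1 : K) := (v.map_one).symm
        _ = v ((a : K) * p + (b : K) * m) := by rw [hK]
        _ ≤ _ := v.map_add _ _
    have ha : v ((a : K) * p) < 1 := by
      rw [v.map_mul]
      calc v (a : K) * v (p : K) ≤ 1 * v (p : K) :=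
            mul_le_mul_left (aux_v_int_le_one v a) _
        _ = v (p : K) := one_mul _
        _ < 1 := hvp
    have hb : v ((b : K) * m) < 1 := by
      rw [v.map_mul]
      calc v (b : K) * v (m : K) ≤ 1 * v (m : K) :=
            mul_le_mul_left (aux_v_int_le_one v b) _
        _ = v (m : K) := one_mul _
        _ < 1 := hlt
    exact absurd h1 (not_le.2 (max_lt ha hb))
  · exact heq

/-- Key step: a coset in the hypersum `[n] + [1]` equals `[n+1]` when `v (n+1) = 1`. -/
lemma aux_step (v : Valuation K Γ₀) {δ : Γ₀} (hδ1 : δ ≤ 1) {n c : K}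
    (hn : v n ≤ 1) (hn1 : v (n + 1) = 1) (h : hsumMem v δ n 1 c) :
    hrel v δ (n + 1) c := by
  obtain ⟨x, y, ⟨u, hu, rfl⟩, ⟨w, hw, rfl⟩, ⟨t, ht, rfl⟩⟩ := h
  have hn1' : (n + 1 : K) ≠ 0 := by
    intro h0; rw [h0, v.map_zero] at hn1; exact zero_ne_one hn1
  have hz : v (n * (u - 1) + (w - 1)) < δ := by
    refine lt_of_le_of_lt (v.map_add _ _) (max_lt ?_ hw)
    rw [v.map_mul]
    calc v n * v (u - 1) ≤ 1 * v (u - 1) := mul_le_mul_left hn _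
      _ = v (u - 1) := one_mul _
      _ < δ := hu
  have ht1 : v t = 1 := aux_v_unit v hδ1 ht
  refine ⟨(1 + (n * (u - 1) + (w - 1)) / (n + 1)) * t, ?_, ?_⟩
  · have h2 : (1 + (n * (u - 1) + (w - 1)) / (n + 1)) * t - 1
        = (t - 1) + ((n * (u - 1) + (w - 1)) / (n + 1)) * t := by ring
    rw [h2]
    refine lt_of_le_of_lt (v.map_add _ _) (max_lt ht ?_)
    rw [v.map_mul, ht1, mul_one, v.map_div, hn1, div_one]
    exact hz
  · have hzz : (n + 1) * ((n * (u - 1) + (w - 1)) / (n + 1)) = n * (u - 1) + (w - 1) := by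
      field_simp
    linear_combination (-t) * hzz

/-- The negative-one step: a coset `[b]` with `[0] ∈ [1] + [b]` equals `[-1]`. -/
lemma aux_neg_one (v : Valuation K Γ₀) {δ : Γ₀} (hδ1 : δ ≤ 1) {b : K}
    (h : hsumMem v δ 1 b 0) : hrel v δ (-1) b := by
  obtain ⟨x, y, ⟨u, hu, rfl⟩, ⟨w, hw, rfl⟩, ⟨t, ht, h0⟩⟩ := h
  have ht1 : v t = 1 := aux_v_unit v hδ1 ht
  have hw1 : v w = 1 := aux_v_unit v hδ1 hw
  have ht0 : t ≠ 0 := by intro h'; rw [h', v.map_zero] at ht1; exact zero_ne_one ht1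
  have hw0 : w ≠ 0 := by intro h'; rw [h', v.map_zero] at hw1; exact zero_ne_one hw1
  have hsum0 : 1 * u + b * w = 0 := by
    rcases mul_eq_zero.1 h0.symm with h' | h'
    · exact h'
    · exact absurd h' ht0
  have hb : b = -u / w := by
    rw [eq_div_iff hw0]
    linear_combination hsum0
  have hval : v (u / w - 1) < δ := by
    have he : u / w - 1 = (u - w) / w := by field_simp
    rw [he, v.map_div, hw1, div_one]
    have h2 : u - w = (u - 1) - (w - 1) := by ring
    rw [h2]
    exact lt_of_le_of_lt (v.map_sub _ _) (max_lt hu hw)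
  exact ⟨u / w, hval, by rw [hb]; ring⟩

end Statement3Aux

/-- Let `K₁`, `K₂` be valued fields whose residue fields have
characteristic `p > 0` (i.e. `ν(p) > 0`), let `γ ∈ (Γ₁)_{≥0}`, `λ ∈ (Γ₂)_{≥0}`, and let
`f : H_γ(K₁) → H_λ(K₂)` be a homomorphism of valued hyperfields over `p`.
Then `f([n]) = [n]` for every integer `n`. -/
theorem statement3 {K₁ K₂ : Type*} [Field K₁] [Field K₂]
    {Γ₁ Γ₂ : Type*} [LinearOrderedCommGroupWithZero Γ₁] [LinearOrderedCommGroupWithZero Γ₂]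
    (v₁ : Valuation K₁ Γ₁) (v₂ : Valuation K₂ Γ₂) (p : ℕ) (hp : p.Prime)
    (hp₁ : v₁ (p : K₁) < 1) (hp₂ : v₂ (p : K₂) < 1)
    (γ : Γ₁) (δ : Γ₂) (hγ_le : γ ≤ 1) (hγ_mem : ∃ x : K₁, x ≠ 0 ∧ v₁ x = γ)
    (hδ_le : δ ≤ 1) (hδ_mem : ∃ x : K₂, x ≠ 0 ∧ v₂ x = δ)
    (f : HypHom v₁ γ v₂ δ) (hf : f.OverP p) :
    ∀ n : ℤ, f.toFun (hmk v₁ γ (n : K₁)) = hmk v₂ δ (n : K₂) := by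
  have hγ0 : γ ≠ 0 := by
    obtain ⟨x, hx0, hx⟩ := hγ_mem
    exact hx ▸ (v₁.ne_zero_iff.2 hx0)
  have hnat : ∀ n : ℕ, f.toFun (hmk v₁ γ (n : K₁)) = hmk v₂ δ (n : K₂) := by
    intro n
    induction n using Nat.strong_induction_on with
    | _ n ih =>
      cases n with
      | zero => simpa using f.map_zero'
      | succ n =>
        by_cases hdvd : p ∣ (n + 1)
        · obtain ⟨m, hm⟩ := hdvd
          have hm0 : m ≠ 0 := by
            intro h0; rw [h0, Nat.mul_zero] at hm; exact Nat.succ_ne_zero n hm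
          have hmlt : m < n + 1 := by
            rw [hm]
            exact (lt_mul_iff_one_lt_left (Nat.pos_of_ne_zero hm0)).2 hp.one_lt
          have h2 := f.map_mul' (p : K₁) (m : K₁) (p : K₂) (m : K₂) hf (ih m hmlt)
          have e₁ : (p : K₁) * (m : K₁) = ((n + 1 : ℕ) : K₁) := by
            rw [hm]; push_cast; ring
          have e₂ : (p : K₂) * (m : K₂) = ((n + 1 : ℕ) : K₂) := by
            rw [hm]; push_cast; ring
          rw [e₁, e₂] at h2
          exact h2
        · have hv2 : v₂ ((n + 1 : ℕ) : K₂) = 1 := aux_v_coprime v₂ hp hp₂ hdvd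
          have hv2' : v₂ ((n : K₂) + 1) = 1 := by push_cast at hv2; exact hv2
          obtain ⟨c, hc⟩ := Quot.exists_rep (f.toFun (hmk v₁ γ ((n : K₁) + 1)))
          have hsum₁ : hsumMem v₁ γ (n : K₁) 1 ((n : K₁) + 1) :=
            ⟨_, _, aux_hrel_refl v₁ hγ0 _, aux_hrel_refl v₁ hγ0 _, aux_hrel_refl v₁ hγ0 _⟩
          have hsum₂ := f.map_hsum' (n : K₁) 1 ((n : K₁) + 1) (n : K₂) 1 c
            (ih n (Nat.lt_succ_self n)) f.map_one' hc.symm hsum₁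
          have hrel₂ : hrel v₂ δ ((n : K₂) + 1) c :=
            aux_step v₂ hδ_le (aux_v_nat_le_one v₂ n) hv2' hsum₂
          have e₁ : ((n + 1 : ℕ) : K₁) = (n : K₁) + 1 := by push_cast; ring
          have e₂ : ((n + 1 : ℕ) : K₂) = (n : K₂) + 1 := by push_cast; ring
          rw [e₁, e₂]
          exact hc.symm.trans (Quot.sound hrel₂).symm
  have hneg : f.toFun (hmk v₁ γ (-1 : K₁)) = hmk v₂ δ (-1 : K₂) := by
    obtain ⟨b, hb⟩ := Quot.exists_rep (f.toFun (hmk v₁ γ (-1 : K₁)))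
    have hsum₁ : hsumMem v₁ γ 1 (-1) (0 : K₁) :=
      ⟨1, -1, aux_hrel_refl v₁ hγ0 1, aux_hrel_refl v₁ hγ0 (-1),
        ⟨1, by simpa using zero_lt_iff.2 hγ0, by ring⟩⟩
    have hsum₂ := f.map_hsum' 1 (-1) 0 1 b 0 f.map_one' hb.symm f.map_zero' hsum₁
    have hr := aux_neg_one v₂ hδ_le hsum₂
    exact hb.symm.trans (Quot.sound hr).symm
  intro n
  rcases Int.eq_nat_or_neg n with ⟨m, rfl | rfl⟩
  · simpa using hnat m
  · have h1 := f.map_mul' (-1) (m : K₁) (-1) (m : K₂) hneg (hnat m)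
    have e₁ : (-1 : K₁) * (m : K₁) = ((-(m : ℕ) : ℤ) : K₁) := by push_cast; ring
    have e₂ : (-1 : K₂) * (m : K₂) = ((-(m : ℕ) : ℤ) : K₂) := by push_cast; ring
    rw [e₁, e₂] at h1
    exact h1
end
end

section
/- Let K be a complete discrete valued field of mixed characteristic (0, p) with perfect residue field k, and let S(K) be its set of Teichmüller representatives. Then: for all a, b ∈ S(K) there is a unique c ∈ S(K) with [c]₁ ∈ [a]₁ + [b]₁ in H₁(K); with this as addition and the coset multiplication, H₁(S(K)) = {[a]₁ : a ∈ S(K)} is a field; and the map [a]₁ ↦ a + m is a field isomorphism from H₁(S(K)) onto the residue field k. -/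
open Multiplicative WithZero Filter

noncomputable section

/-!
A Teichmüller representative is a limit `lim_k z_k ^ p ^ k` in which each `z_{k+1}` is a `p`-th
root of `z_k` modulo `𝔪`; such roots exist because the residue field is perfect. The limit exists
because `p`-th powers improve congruences: since `ν(p) ≥ 1/e`, `x ≡ y mod 𝔪^n` implies
`x ^ p ≡ y ^ p mod 𝔪^(n+1)` (multiplicatively, the bounds are the powers of `expQ (1 / e)`).
The same estimate shows that representatives congruent modulo `𝔪` are equal: writing both as
`p ^ s`-th powers, their difference lies in `𝔪^(s+1)` for every `s`. Hence reduction modulo `𝔪`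
is a multiplicative bijection `S(K) → k`, and as `[c]₁ ∈ [a]₁ + [b]₁` forces `c ≡ a + b mod 𝔪`,
the unique such `c` is the representative of `a + b`.
-/

open Topology

lemma expQ_zero : expQ 0 = 1 := rfl

lemma expQ_le_expQ {a b : ℚ} : expQ a ≤ expQ b ↔ b ≤ a := by
  rw [expQ, expQ, WithZero.coe_le_coe, Multiplicative.ofAdd_le, neg_le_neg_iff]

lemma expQ_lt_expQ {a b : ℚ} : expQ a < expQ b ↔ b < a := by
  rw [expQ, expQ, WithZero.coe_lt_coe, Multiplicative.ofAdd_lt, neg_lt_neg_iff]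

section Hyperfield

variable {K Γ₀ : Type*} [Field K] [LinearOrderedCommGroupWithZero Γ₀] (v : Valuation K Γ₀)

lemma hrel_self {γ : Γ₀} (hγ : γ ≠ 0) (a : K) : hrel v γ a a :=
  ⟨1, by simpa using zero_lt_iff.mpr hγ, (mul_one a).symm⟩

lemma hsumMem_of_val_sub_lt {a b c : K} (h : v (c - (a + b)) < v c) : hsumMem v 1 a b c := by
  have hab : v (a + b) = v c := v.map_eq_of_sub_lt (by rwa [Valuation.map_sub_swap])
  have hc : 0 < v c := zero_le.trans_lt h
  have hab0 : a + b ≠ 0 := by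
    rintro hz
    rw [hz, map_zero] at hab
    exact hc.ne hab
  refine ⟨a, b, hrel_self v one_ne_zero a, hrel_self v one_ne_zero b, c / (a + b), ?_, ?_⟩
  · rw [div_sub_one hab0, map_div₀, hab, div_lt_one₀ hc]
    exact h
  · field_simp

lemma hsumMem_zero_of_val_add_lt {a b : K} (h : v (a + b) < v b) : hsumMem v 1 a b 0 := by
  have hb : 0 < v b := zero_le.trans_lt h
  have hb0 : b ≠ 0 := (map_ne_zero v).mp hb.ne'
  refine ⟨a, -a, hrel_self v one_ne_zero a, ⟨-a / b, ?_, ?_⟩, 1, by simp, by simp⟩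
  · rw [show -a / b - 1 = -((a + b) / b) by rw [add_div, div_self hb0]; ring,
      Valuation.map_neg, map_div₀, div_lt_one₀ hb]
    exact h
  · field_simp

lemma val_sub_add_lt_one_of_hsumMem {a b c : K} (ha : v a ≤ 1) (hb : v b ≤ 1)
    (h : hsumMem v 1 a b c) : v (c - (a + b)) < 1 := by
  obtain ⟨x, y, ⟨u₁, hu₁, rfl⟩, ⟨u₂, hu₂, rfl⟩, ⟨u₃, hu₃, rfl⟩⟩ := h
  have small : ∀ w z : K, v w ≤ 1 → v (z - 1) < 1 → v (w * (z - 1)) < 1 := fun w z hw hz => by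
    rw [map_mul]
    exact (mul_le_of_le_one_left' hw).trans_lt hz
  have hunit : ∀ w z : K, v w ≤ 1 → v (z - 1) < 1 → v (w * z) ≤ 1 := fun w z hw hz => by
    have hz1 : v z = 1 := by simpa using v.map_one_add_of_lt hz
    rwa [map_mul, hz1, mul_one]
  have hxy : v (a * u₁ + b * u₂) ≤ 1 :=
    (v.map_add _ _).trans (max_le (hunit a u₁ ha hu₁) (hunit b u₂ hb hu₂))
  rw [show (a * u₁ + b * u₂) * u₃ - (a + b) =
      (a * u₁ + b * u₂) * (u₃ - 1) + (a * (u₁ - 1) + b * (u₂ - 1)) by ring]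
  exact (v.map_add _ _).trans_lt <| max_lt (small _ _ hxy hu₃) <|
    (v.map_add _ _).trans_lt (max_lt (small _ _ ha hu₁) (small _ _ hb hu₂))

end Hyperfield

namespace Valuation

variable {K Γ₀ : Type*} [Field K] [LinearOrderedCommGroupWithZero Γ₀] (v : Valuation K Γ₀)

lemma exists_pow_sub_pow_eq {p : ℕ} (hp : p.Prime) {x y : K} (hx : v x ≤ 1) (hy : v y ≤ 1) :
    ∃ r : K, v r ≤ 1 ∧ x ^ p - y ^ p = (x - y) ^ p + p * (x - y) * r := by
  have hxy : v (x - y) ≤ 1 := (v.map_sub x y).trans (max_le hx hy)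
  obtain ⟨r, hr⟩ := exists_add_pow_prime_eq hp (⟨x - y, hxy⟩ : v.valuationSubring) ⟨y, hy⟩
  refine ⟨y * r, by rw [map_mul]; exact mul_le_one' hy r.2, ?_⟩
  have hr' := congrArg Subtype.val hr
  push_cast [sub_add_cancel] at hr'
  linear_combination hr'

lemma map_pow_sub_pow_le {p : ℕ} (hp : p.Prime) {x y : K} (hx : v x ≤ 1) (hy : v y ≤ 1) :
    v (x ^ p - y ^ p) ≤ max (v (x - y) ^ p) (v p * v (x - y)) := by
  obtain ⟨r, hr, heq⟩ := v.exists_pow_sub_pow_eq hp hx hy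
  rw [heq, ← map_pow]
  refine (v.map_add _ _).trans (max_le_max le_rfl ?_)
  rw [map_mul, map_mul]
  exact mul_le_of_le_one_right' hr

lemma map_sub_lt_one_of_map_pow_sub_pow_lt_one {p : ℕ} (hp : p.Prime) (hpv : v p < 1)
    {x y : K} (hx : v x ≤ 1) (hy : v y ≤ 1) (h : v (x ^ p - y ^ p) < 1) : v (x - y) < 1 := by
  obtain ⟨r, hr, heq⟩ := v.exists_pow_sub_pow_eq hp hx hy
  have hxy : v (x - y) ≤ 1 := (v.map_sub x y).trans (max_le hx hy)
  have hpow : v ((x - y) ^ p) < 1 := by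
    rw [show (x - y) ^ p = (x ^ p - y ^ p) - p * (x - y) * r by rw [heq]; ring]
    refine (v.map_sub _ _).trans_lt (max_lt h ?_)
    rw [map_mul, map_mul]
    exact ((mul_le_of_le_one_right' hr).trans (mul_le_of_le_one_right' hxy)).trans_lt hpv
  rwa [map_pow, pow_lt_one_iff hp.ne_zero] at hpow

lemma map_sub_le_of_map_succ_sub_le {u : ℕ → K} {c : ℕ → Γ₀} (hc : Antitone c)
    (hu : ∀ n, v (u (n + 1) - u n) ≤ c n) {m n : ℕ} (hmn : m ≤ n) : v (u n - u m) ≤ c m := by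
  induction n, hmn using Nat.le_induction with
  | base => simp
  | succ n hmn ih =>
    rw [← sub_add_sub_cancel (u (n + 1)) (u n) (u m)]
    exact (v.map_add _ _).trans (max_le ((hu n).trans (hc hmn)) ih)

lemma residue_eq_residue_iff (x y : v.valuationSubring) :
    IsLocalRing.residue _ x = IsLocalRing.residue _ y ↔ v ((x : K) - y) < 1 := by
  rw [← sub_eq_zero, ← _root_.map_sub, IsLocalRing.residue_eq_zero_iff, mem_maximalIdeal_iff]
  rfl

end Valuation

namespace Valued

variable {K Γ₀ : Type*} [Field K] [LinearOrderedCommGroupWithZero Γ₀] [Valued K Γ₀]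

lemma map_le_of_tendsto {u : ℕ → K} {x : K} {c : Γ₀} (hu : Tendsto u atTop (𝓝 x))
    (hc : ∀ n, v (u n) ≤ c) : v x ≤ c := by
  by_contra! hlt
  obtain ⟨n, hn⟩ := (hu.eventually_mem (locally_const (zero_le.trans_lt hlt).ne')).exists
  exact (hc n).not_gt (hn.symm ▸ hlt)

lemma cauchySeq_of_map_succ_sub_le [MulArchimedean Γ₀] {u : ℕ → K} {T : Γ₀} (hT : T < 1)
    (hu : ∀ n, v (u (n + 1) - u n) ≤ T ^ n) : CauchySeq u := by
  rw [CauchySeq, cauchy_iff]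
  refine ⟨map_neBot, fun γ => ?_⟩
  have hγ : MonoidWithZeroHom.ValueGroup₀.embedding γ.1 ≠ 0 :=
    (map_ne_zero_iff _ MonoidWithZeroHom.ValueGroup₀.embedding_injective).mpr γ.ne_zero
  obtain ⟨N, hN⟩ := exists_pow_lt₀ hT (Units.mk0 _ hγ)
  refine ⟨{y | v (y - u N) < MonoidWithZeroHom.ValueGroup₀.embedding γ.1}, ?_, ?_⟩
  · rw [mem_map]
    filter_upwards [eventually_ge_atTop N] with n hn
    exact (v.map_sub_le_of_map_succ_sub_le (pow_right_anti₀ zero_le hT.le) hu hn).trans_lt hN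
  · intro a ha b hb
    rw [Valuation.restrict_lt_iff_lt_embedding, ← sub_sub_sub_cancel_right b a (u N)]
    exact (v.map_sub _ _).trans_lt (max_lt hb ha)

end Valued

section Teich

variable {K : Type*} [Field K] [Valued K QM0] {p : ℕ}

lemma zero_mem_teich (hp : p ≠ 0) : (0 : K) ∈ Teich K p :=
  ⟨by simp, fun s => ⟨0, by simp, zero_pow (pow_ne_zero s hp)⟩⟩

lemma mul_mem_teich {a b : K} (ha : a ∈ Teich K p) (hb : b ∈ Teich K p) : a * b ∈ Teich K p := by
  refine ⟨by rw [map_mul]; exact mul_le_one' ha.1 hb.1, fun s => ?_⟩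
  obtain ⟨x, hx, rfl⟩ := ha.2 s
  obtain ⟨y, hy, rfl⟩ := hb.2 s
  exact ⟨x * y, by rw [map_mul]; exact mul_le_one' hx hy, mul_pow x y _⟩

end Teich

namespace IsCompleteDVF

variable {K : Type*} [Field K] [Valued K QM0] {p e : ℕ}

lemma expQ_lt_one (h : IsCompleteDVF K p e) : expQ (1 / e) < 1 := by
  have : (0 : ℚ) < e := by exact_mod_cast h.epos
  rw [← expQ_zero, expQ_lt_expQ]
  positivity

lemma val_p_le (h : IsCompleteDVF K p e) : Valued.v (p : K) ≤ expQ (1 / e) := by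
  have : (0 : ℚ) < e := by exact_mod_cast h.epos
  rw [h.v_p, expQ_le_expQ, div_le_one this]
  exact_mod_cast h.epos

lemma val_le_of_val_lt_one (h : IsCompleteDVF K p e) {z : K} (hz : Valued.v z < 1) :
    Valued.v z ≤ expQ (1 / e) := by
  rcases eq_or_ne z 0 with rfl | hz0
  · simp
  obtain ⟨k, hk⟩ := h.discrete z hz0
  have he : (0 : ℚ) < e := by exact_mod_cast h.epos
  rw [hk, ← expQ_zero, expQ_lt_expQ, div_pos_iff_of_pos_right he] at hz
  rw [hk, expQ_le_expQ]
  gcongr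
  exact_mod_cast hz

lemma val_pow_pow_sub_pow_pow_le (h : IsCompleteDVF K p e) {x y : K} (hx : Valued.v x ≤ 1)
    (hy : Valued.v y ≤ 1) (hxy : Valued.v (x - y) < 1) (k : ℕ) :
    Valued.v (x ^ p ^ k - y ^ p ^ k) ≤ expQ (1 / e) ^ (k + 1) := by
  induction k with
  | zero => simpa only [pow_zero, pow_one, zero_add] using h.val_le_of_val_lt_one hxy
  | succ k ih =>
    have hT : expQ (1 / e) ≤ 1 := h.expQ_lt_one.le
    have hxk : Valued.v (x ^ p ^ k) ≤ 1 := by rw [map_pow]; exact pow_le_one' hx _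
    have hyk : Valued.v (y ^ p ^ k) ≤ 1 := by rw [map_pow]; exact pow_le_one' hy _
    rw [pow_succ, pow_mul, pow_mul]
    refine (Valued.v.map_pow_sub_pow_le h.prime hxk hyk).trans (max_le ?_ ?_)
    · calc Valued.v (x ^ p ^ k - y ^ p ^ k) ^ p ≤ (expQ (1 / e) ^ (k + 1)) ^ p := by gcongr
        _ ≤ expQ (1 / e) ^ (k + 1 + 1) := by
          rw [← pow_mul]
          exact pow_le_pow_right_of_le_one' hT (by nlinarith [h.prime.two_le])
    · rw [pow_succ' (expQ (1 / e))]
      exact mul_le_mul' h.val_p_le ih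

lemma val_sub_lt_one_of_val_pow_pow_sub_lt_one (h : IsCompleteDVF K p e) {x y : K}
    (hx : Valued.v x ≤ 1) (hy : Valued.v y ≤ 1) (s : ℕ)
    (hxy : Valued.v (x ^ p ^ s - y ^ p ^ s) < 1) : Valued.v (x - y) < 1 := by
  induction s with
  | zero => simpa using hxy
  | succ s ih =>
    refine ih (Valued.v.map_sub_lt_one_of_map_pow_sub_pow_lt_one h.prime
      (h.val_p_le.trans_lt h.expQ_lt_one) ?_ ?_ ?_)
    · rw [map_pow]; exact pow_le_one' hx _
    · rw [map_pow]; exact pow_le_one' hy _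
    · rwa [← pow_mul, ← pow_mul, ← pow_succ]

lemma eq_of_mem_teich_of_val_sub_lt_one (h : IsCompleteDVF K p e) {a b : K}
    (ha : a ∈ Teich K p) (hb : b ∈ Teich K p) (hab : Valued.v (a - b) < 1) : a = b := by
  by_contra hne
  have hab0 : Valued.v (a - b) ≠ 0 := by simpa [sub_eq_zero] using hne
  obtain ⟨s, hs⟩ := exists_pow_lt₀ h.expQ_lt_one (Units.mk0 _ hab0)
  obtain ⟨x, hx, rfl⟩ := ha.2 s
  obtain ⟨y, hy, rfl⟩ := hb.2 s
  have hxy := h.val_sub_lt_one_of_val_pow_pow_sub_lt_one hx hy s hab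
  have := (h.val_pow_pow_sub_pow_pow_le hx hy hxy s).trans
    (pow_le_pow_right_of_le_one' h.expQ_lt_one.le s.le_succ)
  exact (this.trans_lt hs).false

lemma val_eq_one_of_mem_teich (h : IsCompleteDVF K p e) {a : K} (ha : a ∈ Teich K p)
    (ha0 : a ≠ 0) : Valued.v a = 1 := by
  refine ha.1.antisymm (not_lt.mp fun hlt => ha0 ?_)
  exact h.eq_of_mem_teich_of_val_sub_lt_one ha (zero_mem_teich h.prime.ne_zero)
    (by simpa using hlt)

lemma exists_seq_pow_sub_lt_one (h : IsCompleteDVF K p e) {x : K} (hx : Valued.v x ≤ 1) :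
    ∃ z : ℕ → K, z 0 = x ∧ (∀ s, Valued.v (z s) ≤ 1) ∧
      ∀ s, Valued.v (z s - z (s + 1) ^ p) < 1 := by
  choose root hroot hsub using fun y : {y : K // Valued.v y ≤ 1} => h.perfectResidue y.1 y.2
  let w : ℕ → {y : K // Valued.v y ≤ 1} := fun s => (fun y => ⟨root y, hroot y⟩)^[s] ⟨x, hx⟩
  refine ⟨fun s => (w s).1, rfl, fun s => (w s).2, fun s => ?_⟩
  simp only [w, Function.iterate_succ_apply']
  exact hsub _

lemma val_pow_pow_succ_sub_le (h : IsCompleteDVF K p e) {z : ℕ → K}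
    (hz₁ : ∀ s, Valued.v (z s) ≤ 1) (hz : ∀ s, Valued.v (z s - z (s + 1) ^ p) < 1) (k : ℕ) :
    Valued.v (z (k + 1) ^ p ^ (k + 1) - z k ^ p ^ k) ≤ expQ (1 / e) ^ (k + 1) := by
  rw [pow_succ', pow_mul]
  refine h.val_pow_pow_sub_pow_pow_le ?_ (hz₁ k) ?_ k
  · rw [map_pow]; exact pow_le_one' (hz₁ _) _
  · rw [Valuation.map_sub_swap]; exact hz k

lemma cauchySeq_pow_pow (h : IsCompleteDVF K p e) {z : ℕ → K}
    (hz₁ : ∀ s, Valued.v (z s) ≤ 1) (hz : ∀ s, Valued.v (z s - z (s + 1) ^ p) < 1) :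
    CauchySeq fun k => z k ^ p ^ k :=
  Valued.cauchySeq_of_map_succ_sub_le h.expQ_lt_one fun k =>
    (h.val_pow_pow_succ_sub_le hz₁ hz k).trans
      (pow_le_pow_right_of_le_one' h.expQ_lt_one.le k.le_succ)

lemma val_pow_pow_sub_le (h : IsCompleteDVF K p e) {z : ℕ → K}
    (hz₁ : ∀ s, Valued.v (z s) ≤ 1) (hz : ∀ s, Valued.v (z s - z (s + 1) ^ p) < 1) (k : ℕ) :
    Valued.v (z k ^ p ^ k - z 0) ≤ expQ (1 / e) := by
  simpa using Valued.v.map_sub_le_of_map_succ_sub_le (u := fun k => z k ^ p ^ k)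
    (c := fun k => expQ (1 / e) ^ (k + 1))
    (fun _ _ hmn => pow_le_pow_right_of_le_one' h.expQ_lt_one.le (Nat.succ_le_succ hmn))
    (h.val_pow_pow_succ_sub_le hz₁ hz) k.zero_le

lemma exists_mem_teich_val_sub_lt_one (h : IsCompleteDVF K p e) {x : K}
    (hx : Valued.v x ≤ 1) : ∃ a ∈ Teich K p, Valued.v (x - a) < 1 := by
  have := h.complete
  obtain ⟨z, rfl, hz₁, hz⟩ := h.exists_seq_pow_sub_lt_one hx
  have hlim : ∀ s, ∃ t, Tendsto (fun k => z (s + k) ^ p ^ k) atTop (𝓝 t) := fun s =>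
    cauchySeq_tendsto_of_complete (h.cauchySeq_pow_pow (fun k => hz₁ _) fun k => hz _)
  choose t ht using hlim
  have ht₀ : Tendsto (fun k => z k ^ p ^ k) atTop (𝓝 (t 0)) := by simpa using ht 0
  have hpow : ∀ s, t s ^ p ^ s = t 0 := fun s => by
    refine tendsto_nhds_unique ((ht s).pow _) ?_
    convert ht₀.comp (tendsto_add_atTop_nat s) using 2 with k
    simp only [Function.comp_apply, ← pow_mul, ← pow_add, add_comm]
  have hval : ∀ s, Valued.v (t s) ≤ 1 := fun s =>
    Valued.map_le_of_tendsto (ht s) fun k => by rw [map_pow]; exact pow_le_one' (hz₁ _) _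
  refine ⟨t 0, ⟨hval 0, fun s => ⟨t s, hval s, hpow s⟩⟩, ?_⟩
  rw [Valuation.map_sub_swap]
  exact (Valued.map_le_of_tendsto (ht₀.sub_const (z 0))
    (h.val_pow_pow_sub_le hz₁ hz)).trans_lt h.expQ_lt_one

lemma exists_unique_hsumMem (h : IsCompleteDVF K p e) {a b : K} (ha : a ∈ Teich K p)
    (hb : b ∈ Teich K p) : ∃! c : K, c ∈ Teich K p ∧ hsumMem Valued.v 1 a b c := by
  obtain ⟨c, hc, hc_lt⟩ :=
    h.exists_mem_teich_val_sub_lt_one ((Valued.v.map_add a b).trans (max_le ha.1 hb.1))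
  refine ⟨c, ⟨hc, ?_⟩, fun c' ⟨hc', hsum⟩ => h.eq_of_mem_teich_of_val_sub_lt_one hc' hc ?_⟩
  · rcases eq_or_ne c 0 with rfl | hc0
    · rw [sub_zero] at hc_lt
      rcases eq_or_ne b 0 with rfl | hb0
      · obtain rfl : a = 0 := h.eq_of_mem_teich_of_val_sub_lt_one ha
          (zero_mem_teich h.prime.ne_zero) (by simpa using hc_lt)
        exact ⟨0, 0, hrel_self _ one_ne_zero 0, hrel_self _ one_ne_zero 0, 1, by simp, by simp⟩
      · refine hsumMem_zero_of_val_add_lt _ ?_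
        rwa [h.val_eq_one_of_mem_teich hb hb0]
    · refine hsumMem_of_val_sub_lt _ ?_
      rwa [h.val_eq_one_of_mem_teich hc hc0, Valuation.map_sub_swap]
  · rw [← sub_add_sub_cancel c' (a + b) c]
    exact (Valued.v.map_add _ _).trans_lt
      (max_lt (val_sub_add_lt_one_of_hsumMem _ ha.1 hb.1 hsum) hc_lt)

end IsCompleteDVF

/-- Let `K` be a complete discrete valued field of mixed characteristic
`(0,p)` with perfect residue field `k`, and `S(K)` its set of Teichmüller representatives.
Then: for all `a, b ∈ S(K)` there is a unique `c ∈ S(K)` with `[c]₁ ∈ [a]₁ + [b]₁` in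
`H₁(K)`; `S(K)` is closed under multiplication; and the map `[a]₁ ↦ a + 𝔪` is a field
isomorphism from `H₁(S(K))` onto the residue field `k` (it is bijective, multiplicative,
and carries the hyperfield addition of `H₁(K)` to the addition of `k`). -/
theorem statement4 (K : Type*) [Field K] [Valued K QM0] (p e : ℕ)
    (h : IsCompleteDVF K p e) :
    (∀ a ∈ Teich K p, ∀ b ∈ Teich K p,
      ∃! c : K, c ∈ Teich K p ∧ hsumMem (Valued.v : Valuation K QM0) 1 a b c) ∧
    (∀ a ∈ Teich K p, ∀ b ∈ Teich K p, a * b ∈ Teich K p) ∧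
    Function.Bijective (fun a : Teich K p =>
      IsLocalRing.residue (Valued.v : Valuation K QM0).valuationSubring
        ⟨a.1, (Valuation.mem_valuationSubring_iff _ _).mpr a.2.1⟩) ∧
    (∀ a b : Teich K p,
      IsLocalRing.residue (Valued.v : Valuation K QM0).valuationSubring
          ⟨a.1 * b.1, (Valuation.mem_valuationSubring_iff _ _).mpr
            (by rw [map_mul]; exact mul_le_one' a.2.1 b.2.1)⟩ =
        IsLocalRing.residue _ ⟨a.1, (Valuation.mem_valuationSubring_iff _ _).mpr a.2.1⟩ *
          IsLocalRing.residue _ ⟨b.1, (Valuation.mem_valuationSubring_iff _ _).mpr b.2.1⟩) ∧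
    (∀ a b c : Teich K p, hsumMem (Valued.v : Valuation K QM0) 1 a.1 b.1 c.1 →
      IsLocalRing.residue (Valued.v : Valuation K QM0).valuationSubring
          ⟨c.1, (Valuation.mem_valuationSubring_iff _ _).mpr c.2.1⟩ =
        IsLocalRing.residue _ ⟨a.1, (Valuation.mem_valuationSubring_iff _ _).mpr a.2.1⟩ +
          IsLocalRing.residue _ ⟨b.1, (Valuation.mem_valuationSubring_iff _ _).mpr b.2.1⟩) := by
  refine ⟨fun a ha b hb => h.exists_unique_hsumMem ha hb, fun a ha b hb => mul_mem_teich ha hb,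
    ⟨fun a b hab => Subtype.ext ?_, fun r => ?_⟩, fun a b => ?_, fun a b c hsum => ?_⟩
  · exact h.eq_of_mem_teich_of_val_sub_lt_one a.2 b.2
      ((Valued.v.residue_eq_residue_iff _ _).mp hab)
  · obtain ⟨x, rfl⟩ := IsLocalRing.residue_surjective r
    obtain ⟨a, ha, hxa⟩ := h.exists_mem_teich_val_sub_lt_one x.2
    refine ⟨⟨a, ha⟩, (Valued.v.residue_eq_residue_iff _ _).mpr ?_⟩
    rwa [Valuation.map_sub_swap]
  · exact map_mul (IsLocalRing.residue _)
      (⟨a, _⟩ : (Valued.v : Valuation K QM0).valuationSubring) ⟨b, _⟩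
  · rw [← map_add]
    exact (Valued.v.residue_eq_residue_iff _ _).mpr
      (val_sub_add_lt_one_of_hsumMem _ a.2.1 b.2.1 hsum)
end
end

section
/- Let (K₁, ν₁) and (K₂, ν₂) be finitely ramified valued fields whose residue fields have the same characteristic p > 0 and which have the same ramification index e, with both valuations normalized so that ν₁(p) = ν₂(p) = 1. Then for all n, m ≥ 1 and every homomorphism of valued hyperfields over p, f : H_n(K₁) → H_m(K₂), one has ν_H(f(α)) = ν_H(α) for every α ∈ H_n(K₁). -/
open Multiplicative WithZero Filter

noncomputable section

/-- The multiplicative value group corresponding to additive real values. -/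
abbrev RM0 : Type := WithZero (Multiplicative ℝ)

/-- `expR r` corresponds to the additive value `r ∈ ℝ`. -/
def expR (r : ℝ) : RM0 := ((Multiplicative.ofAdd (-r) : Multiplicative ℝ) : RM0)

/-! By finite ramification the value group of `K₁` is `(1/e)ℤ`, so every nonzero `a` satisfies
`ν(a^e) = ν(p^k)` for some `k ∈ ℤ`. Since `f` is multiplicative, fixes `[p]` and preserves and
reflects the order of values, the same relation holds for `f[a]`; as `ν(p) = 1` in both fields,
extracting `e`-th roots in the torsion-free value group gives `ν(f[a]) = ν(a)`. -/

open Set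

lemma AddSubgroup.ncard_zmultiples_inter_Ioc {c : ℝ} (hc : 0 < c) (M : ℤ) :
    ((AddSubgroup.zmultiples c : Set ℝ) ∩ Ioc 0 (M * c)).ncard = M.toNat := by
  have hS : (AddSubgroup.zmultiples c : Set ℝ) ∩ Ioc 0 (M * c) =
      (fun k : ℤ => (k : ℝ) * c) '' Icc 1 M := by
    ext r
    simp only [mem_inter_iff, SetLike.mem_coe, AddSubgroup.mem_zmultiples_iff, mem_Ioc,
      mem_image, mem_Icc, zsmul_eq_mul]
    constructor
    · rintro ⟨⟨k, rfl⟩, h0, hM⟩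
      refine ⟨k, ⟨?_, ?_⟩, rfl⟩
      · exact_mod_cast (pos_of_mul_pos_left h0 hc.le : (0 : ℝ) < k)
      · exact_mod_cast le_of_mul_le_mul_right hM hc
    · rintro ⟨k, ⟨h1, hM⟩, rfl⟩
      have h1' : (1 : ℝ) ≤ k := by exact_mod_cast h1
      have hM' : (k : ℝ) ≤ M := by exact_mod_cast hM
      exact ⟨⟨k, rfl⟩, by positivity, by gcongr⟩
  rw [hS, ncard_image_of_injective _ fun a b h => Int.cast_injective (mul_right_cancel₀ hc.ne' h),
    ← Finset.coe_Icc, ncard_coe_finset, Int.card_Icc, add_sub_cancel_right]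

lemma AddSubgroup.exists_mul_eq_intCast_of_ncard_Ioc (G : AddSubgroup ℝ) (h1 : (1 : ℝ) ∈ G)
    {e : ℕ} (hfin : ((G : Set ℝ) ∩ Ioc 0 1).Finite)
    (hcard : ((G : Set ℝ) ∩ Ioc 0 1).ncard = e) :
    ∀ r ∈ G, ∃ k : ℤ, (e : ℝ) * r = k := by
  obtain ⟨c, ⟨hcG, hc0, hc1⟩, hmin⟩ := exists_min_image _ id hfin ⟨1, h1, one_pos, le_rfl⟩
  have hleast : IsLeast {g | g ∈ G ∧ 0 < g} c :=
    ⟨⟨hcG, hc0⟩, fun g ⟨hgG, hg0⟩ => (le_or_gt g 1).elim (fun hg1 => hmin g ⟨hgG, hg0, hg1⟩)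
      fun hg1 => hc1.trans hg1.le⟩
  have hG : G = AddSubgroup.zmultiples c :=
    (AddSubgroup.cyclic_of_min hleast).trans (AddSubgroup.zmultiples_eq_closure c).symm
  obtain ⟨M, hM⟩ := AddSubgroup.mem_zmultiples_iff.mp (hG ▸ h1)
  rw [zsmul_eq_mul] at hM
  have hMe : (M : ℝ) = e := by
    rw [hG, ← hM, AddSubgroup.ncard_zmultiples_inter_Ioc hc0] at hcard
    have hM0 : (0 : ℝ) < M := pos_of_mul_pos_left (hM ▸ one_pos) hc0.le
    rw [← hcard, ← Int.toNat_of_nonneg (Int.cast_pos.mp hM0).le]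
    rfl
  intro r hr
  obtain ⟨k, rfl⟩ := AddSubgroup.mem_zmultiples_iff.mp (hG ▸ hr)
  exact ⟨k, by rw [zsmul_eq_mul, ← hMe, mul_left_comm, hM, mul_one]⟩

section expR

lemma expR_ne_zero (r : ℝ) : expR r ≠ 0 := WithZero.coe_ne_zero

lemma expR_injective : Function.Injective expR := fun r s h => by
  simpa [expR] using h

lemma expR_le_expR {r s : ℝ} : expR r ≤ expR s ↔ s ≤ r := by
  rw [expR, expR, WithZero.coe_le_coe, Multiplicative.ofAdd_le, neg_le_neg_iff]

lemma expR_lt_expR {r s : ℝ} : expR r < expR s ↔ s < r := by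
  rw [expR, expR, WithZero.coe_lt_coe, Multiplicative.ofAdd_lt, neg_lt_neg_iff]

lemma expR_zero : expR 0 = 1 := by simp [expR]

lemma expR_add (r s : ℝ) : expR (r + s) = expR r * expR s := by
  simp [expR, ofAdd_add, mul_comm]

lemma expR_neg (r : ℝ) : expR (-r) = (expR r)⁻¹ := by
  simp [expR]

lemma expR_intCast_mul (k : ℤ) (r : ℝ) : expR (k * r) = expR r ^ k := by
  simp [expR, ← WithZero.coe_zpow, ← ofAdd_zsmul, mul_comm]

lemma exists_eq_expR {x : RM0} (hx : x ≠ 0) : ∃ r : ℝ, x = expR r := by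
  obtain ⟨u, rfl⟩ := WithZero.ne_zero_iff_exists.mp hx
  exact ⟨-Multiplicative.toAdd u, by simp [expR]⟩

end expR

section ValueGroup

variable {K : Type*} [Field K] (v : Valuation K RM0)

def Valuation.addValueGroup : AddSubgroup ℝ where
  carrier := expR ⁻¹' range v
  zero_mem' := ⟨1, by rw [map_one, expR_zero]⟩
  add_mem' := by
    rintro r s ⟨x, hx⟩ ⟨y, hy⟩
    exact ⟨x * y, by rw [map_mul, hx, hy, expR_add]⟩
  neg_mem' := by
    rintro r ⟨x, hx⟩
    exact ⟨x⁻¹, by rw [map_inv₀, hx, expR_neg]⟩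

lemma Valuation.setOf_value_mem_Ico_eq_image :
    {g : RM0 | (∃ x : K, x ≠ 0 ∧ v x = g) ∧ expR 1 ≤ g ∧ g < 1} =
      expR '' ((v.addValueGroup : Set ℝ) ∩ Ioc 0 1) := by
  ext g
  constructor
  · rintro ⟨⟨x, hx, rfl⟩, h1, hlt⟩
    obtain ⟨r, hr⟩ := exists_eq_expR ((v.ne_zero_iff).mpr hx)
    rw [hr, ← expR_zero, expR_lt_expR] at hlt
    rw [hr, expR_le_expR] at h1
    exact ⟨r, ⟨⟨x, hr⟩, hlt, h1⟩, hr.symm⟩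
  · rintro ⟨r, ⟨⟨x, hx⟩, h0, h1⟩, rfl⟩
    refine ⟨⟨x, fun h => expR_ne_zero r ?_, hx⟩, expR_le_expR.mpr h1,
      expR_zero ▸ expR_lt_expR.mpr h0⟩
    rw [← hx, h, map_zero]

lemma Valuation.exists_pow_eq_zpow_of_ncard {b : K} (hb : v b = expR 1) {e : ℕ}
    (hfin : {g : RM0 | (∃ x : K, x ≠ 0 ∧ v x = g) ∧ expR 1 ≤ g ∧ g < 1}.Finite)
    (hcard : {g : RM0 | (∃ x : K, x ≠ 0 ∧ v x = g) ∧ expR 1 ≤ g ∧ g < 1}.ncard = e)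
    {x : K} (hx : x ≠ 0) : ∃ k : ℤ, v x ^ e = v b ^ k := by
  rw [v.setOf_value_mem_Ico_eq_image] at hfin hcard
  rw [ncard_image_of_injective _ expR_injective] at hcard
  obtain ⟨r, hr⟩ := exists_eq_expR ((v.ne_zero_iff).mpr hx)
  obtain ⟨k, hk⟩ := v.addValueGroup.exists_mul_eq_intCast_of_ncard_Ioc ⟨b, hb⟩
    (hfin.of_finite_image expR_injective.injOn) hcard r ⟨x, hr⟩
  refine ⟨k, ?_⟩
  rw [hr, hb, ← zpow_natCast, ← expR_intCast_mul, ← expR_intCast_mul, Int.cast_natCast, hk,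
    mul_one]

end ValueGroup

namespace HypHom

variable {K₁ K₂ : Type*} [Field K₁] [Field K₂]
variable {Γ₁ Γ₂ : Type*} [LinearOrderedCommGroupWithZero Γ₁] [LinearOrderedCommGroupWithZero Γ₂]
variable {v₁ : Valuation K₁ Γ₁} {γ : Γ₁} {v₂ : Valuation K₂ Γ₂} {δ : Γ₂} (f : HypHom v₁ γ v₂ δ)

lemma map_hmk_pow {x : K₁} {x' : K₂} (hx : f.toFun (hmk v₁ γ x) = hmk v₂ δ x') (j : ℕ) :
    f.toFun (hmk v₁ γ (x ^ j)) = hmk v₂ δ (x' ^ j) := by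
  induction j with
  | zero => simpa using f.map_one'
  | succ j ih => simpa only [pow_succ] using f.map_mul' _ _ _ _ ih hx

lemma val_eq_iff {x y : K₁} {x' y' : K₂} (hx : f.toFun (hmk v₁ γ x) = hmk v₂ δ x')
    (hy : f.toFun (hmk v₁ γ y) = hmk v₂ δ y') : v₁ x = v₁ y ↔ v₂ x' = v₂ y' := by
  simp only [le_antisymm_iff, f.val_le_iff' x y x' y' hx hy, f.val_le_iff' y x y' x' hy hx]

lemma val_eq_zero_iff {x : K₁} {x' : K₂} (hx : f.toFun (hmk v₁ γ x) = hmk v₂ δ x') :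
    v₂ x' = 0 ↔ x = 0 := by
  simpa using (f.val_eq_iff hx f.map_zero').symm

lemma val_pow_eq_zpow {x b : K₁} {x' b' : K₂} (hx : f.toFun (hmk v₁ γ x) = hmk v₂ δ x')
    (hb : f.toFun (hmk v₁ γ b) = hmk v₂ δ b') (hb0 : b ≠ 0) {e : ℕ} {k : ℤ}
    (h : v₁ x ^ e = v₁ b ^ k) : v₂ x' ^ e = v₂ b' ^ k := by
  have hb0' : v₂ b' ≠ 0 := (f.val_eq_zero_iff hb).not.mpr hb0
  -- writing `k = k⁺ - k⁻` leaves only natural powers, which `f` transports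
  rw [← Int.toNat_sub_toNat_neg k, zpow_sub₀ (v₁.ne_zero_iff.mpr hb0), zpow_natCast,
    zpow_natCast, eq_div_iff (pow_ne_zero _ (v₁.ne_zero_iff.mpr hb0))] at h
  rw [← Int.toNat_sub_toNat_neg k, zpow_sub₀ hb0', zpow_natCast, zpow_natCast,
    eq_div_iff (pow_ne_zero _ hb0')]
  have hv₁ : v₁ (x ^ e * b ^ (-k).toNat) = v₁ (b ^ k.toNat) := by
    rwa [map_mul, map_pow, map_pow, map_pow]
  have hmul := f.map_mul' _ _ _ _ (f.map_hmk_pow hx e) (f.map_hmk_pow hb (-k).toNat)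
  have hv₂ := (f.val_eq_iff hmul (f.map_hmk_pow hb k.toNat)).mp hv₁
  rwa [map_mul, map_pow, map_pow, map_pow] at hv₂

end HypHom

theorem statement13_general {K₁ K₂ : Type*} [Field K₁] [Field K₂]
    (v₁ : Valuation K₁ RM0) (v₂ : Valuation K₂ RM0) (p e n m : ℕ)
    (he : 0 < e)
    -- normalization ν(p) = 1:
    (hv₁p : v₁ (p : K₁) = expR 1) (hv₂p : v₂ (p : K₂) = expR 1)
    -- finitely ramified with ramification index e (the set {γ ∈ Γ : 0 < γ ≤ ν(p)}
    -- has exactly e elements):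
    (hfin₁ : {g : RM0 | (∃ x : K₁, x ≠ 0 ∧ v₁ x = g) ∧ expR 1 ≤ g ∧ g < 1}.Finite)
    (hcard₁ : {g : RM0 | (∃ x : K₁, x ≠ 0 ∧ v₁ x = g) ∧ expR 1 ≤ g ∧ g < 1}.ncard = e)
    (f : HypHom v₁ (expR (((n : ℝ) - 1) / e)) v₂ (expR (((m : ℝ) - 1) / e)))
    (hf : f.OverP p) :
    ∀ (a : K₁) (a' : K₂),
      f.toFun (hmk v₁ (expR (((n : ℝ) - 1) / e)) a) = hmk v₂ (expR (((m : ℝ) - 1) / e)) a' →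
      v₂ a' = v₁ a := by
  intro a a' ha
  rcases eq_or_ne a 0 with rfl | ha0
  · rw [map_zero, (f.val_eq_zero_iff ha).mpr rfl]
  have hp0 : (p : K₁) ≠ 0 := v₁.ne_zero_iff.mp (hv₁p ▸ expR_ne_zero 1)
  obtain ⟨k, hk⟩ := v₁.exists_pow_eq_zpow_of_ncard hv₁p hfin₁ hcard₁ ha0
  have hk' := f.val_pow_eq_zpow ha hf hp0 hk
  exact pow_left_inj he.ne' |>.mp (by rw [hk', hk, hv₁p, hv₂p])

/-- Let `(K₁, ν₁)` and `(K₂, ν₂)` be finitely ramified valued fields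
whose residue fields have the same characteristic `p > 0` and which have the same
ramification index `e`, with both valuations normalized (`Γ ⊆ ℝ`, `ν(p) = 1`), so that
the set of values in `(0, 1]` has exactly `e` elements.  Then for all `n, m ≥ 1` and
every homomorphism of valued hyperfields over `p`, `f : H_n(K₁) → H_m(K₂)`, we have
`ν_H(f α) = ν_H(α)` for every `α ∈ H_n(K₁)`. -/
theorem statement13 {K₁ K₂ : Type*} [Field K₁] [Field K₂]
    (v₁ : Valuation K₁ RM0) (v₂ : Valuation K₂ RM0) (p e n m : ℕ)
    (hp : p.Prime) (he : 0 < e) (hn : 1 ≤ n) (hm : 1 ≤ m)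
    -- normalization ν(p) = 1:
    (hv₁p : v₁ (p : K₁) = expR 1) (hv₂p : v₂ (p : K₂) = expR 1)
    -- finitely ramified with ramification index e (the set {γ ∈ Γ : 0 < γ ≤ ν(p)}
    -- has exactly e elements):
    (hfin₁ : {g : RM0 | (∃ x : K₁, x ≠ 0 ∧ v₁ x = g) ∧ expR 1 ≤ g ∧ g < 1}.Finite)
    (hcard₁ : {g : RM0 | (∃ x : K₁, x ≠ 0 ∧ v₁ x = g) ∧ expR 1 ≤ g ∧ g < 1}.ncard = e)
    (hfin₂ : {g : RM0 | (∃ x : K₂, x ≠ 0 ∧ v₂ x = g) ∧ expR 1 ≤ g ∧ g < 1}.Finite)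
    (hcard₂ : {g : RM0 | (∃ x : K₂, x ≠ 0 ∧ v₂ x = g) ∧ expR 1 ≤ g ∧ g < 1}.ncard = e)
    (f : HypHom v₁ (expR (((n : ℝ) - 1) / e)) v₂ (expR (((m : ℝ) - 1) / e)))
    (hf : f.OverP p) :
    ∀ (a : K₁) (a' : K₂),
      f.toFun (hmk v₁ (expR (((n : ℝ) - 1) / e)) a) = hmk v₂ (expR (((m : ℝ) - 1) / e)) a' →
      v₂ a' = v₁ a :=
  statement13_general v₁ v₂ p e n m he hv₁p hv₂p hfin₁ hcard₁ f hf
end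
end

section
/- Let K be a discrete valued field with valuation ring R_K and maximal ideal m_K, let n ≥ 1, and set R := R_K/m_K^n. Let M be a free R-module of rank 1 and ε : M → R an R-module homomorphism whose image is the maximal ideal m_K/m_K^n of R. Then there is an R-module isomorphism η : M → m_K/m_K^{n+1} such that ε_n ∘ η = ε, where ε_n : m_K/m_K^{n+1} → R_K/m_K^n is the R-module homomorphism induced by the inclusion m_K ⊆ R_K. (In other words, every Deligne triple of the form (R_n(K), M, ε) is isomorphic to the triple T_n(K) = (R_n(K), m_K/m_K^{n+1}, ε_n).) -/
open Multiplicative WithZero Filter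

noncomputable section

section Statement14

set_option synthInstance.maxHeartbeats 1000000
set_option maxHeartbeats 1000000

/-- Additive-integer-valued value group. -/
abbrev ZM0 : Type := WithZero (Multiplicative ℤ)

/-- `expZ k` corresponds to the additive value `k ∈ ℤ`. -/
def expZ (k : ℤ) : ZM0 := ((Multiplicative.ofAdd (-k) : Multiplicative ℤ) : ZM0)

variable {K : Type*} [Field K] (v : Valuation K ZM0) (n : ℕ)

/-- The maximal ideal of the valuation ring. -/
def mIdeal : Ideal v.valuationSubring :=
  IsLocalRing.maximalIdeal v.valuationSubring

/-- The `n`-th residue ring `R_n(K) = R_K/𝔪_K^n`. -/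
abbrev ResRing : Type _ := v.valuationSubring ⧸ (mIdeal v) ^ n

/-- The module `𝔪_K/𝔪_K^{n+1}`. -/
abbrev MModule : Type _ :=
  ↥(mIdeal v) ⧸ (Submodule.comap (mIdeal v).subtype ((mIdeal v) ^ (n + 1)))

theorem mModule_torsion :
    Module.IsTorsionBySet v.valuationSubring (MModule v n) ↑((mIdeal v) ^ n) := by
  intro x a
  obtain ⟨y, rfl⟩ := Submodule.Quotient.mk_surjective _ x
  rw [← Submodule.Quotient.mk_smul]
  rw [Submodule.Quotient.mk_eq_zero]
  rw [Submodule.mem_comap]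
  show (a : v.valuationSubring) * (y : v.valuationSubring) ∈ (mIdeal v) ^ (n + 1)
  rw [pow_succ]
  exact Ideal.mul_mem_mul a.2 y.2

/-- `𝔪_K/𝔪_K^{n+1}` as a module over `R_n(K) = R_K/𝔪^n`. -/
noncomputable instance : Module (ResRing v n) (MModule v n) :=
  (mModule_torsion v n).module

/-- The map `ε_n : 𝔪_K/𝔪_K^{n+1} → R_K/𝔪_K^n` induced by the inclusion `𝔪_K ⊆ R_K`. -/
noncomputable def epsN : MModule v n →ₗ[v.valuationSubring] ResRing v n :=
  Submodule.liftQ _ (((mIdeal v ^ n : Ideal v.valuationSubring).mkQ).comp (mIdeal v).subtype)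
    (by
      intro x hx
      rw [Submodule.mem_comap] at hx
      simp only [LinearMap.mem_ker, LinearMap.comp_apply, Submodule.mkQ_apply,
        Submodule.Quotient.mk_eq_zero]
      exact Ideal.pow_le_pow_right (Nat.le_succ n) hx)

/-! The valuation ring is a discrete valuation ring with some uniformizer `ϖ`, so `𝔪_K/𝔪_K^{n+1}`
is free of rank one over `R_n(K)` on the class `[ϖ]`, which `ε_n` sends to `ϖ̄`. If `e` generates
`M`, then `ε(e)` and `ϖ̄` generate the same ideal of the local ring `R_n(K)`, hence `ε(e) = u ϖ̄`
for a unit `u`, and `η : e ↦ u [ϖ]` is the required isomorphism. -/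

lemma expZ_one_lt_one : expZ 1 < 1 := by
  rw [show expZ 1 = WithZero.exp (-1) from rfl, ← WithZero.exp_zero, WithZero.exp_lt_exp]
  norm_num

namespace Valuation

variable {v} {π : K}

lemma isRankOneDiscrete_of_eq_expZ_one (hπ : v π = expZ 1) : v.IsRankOneDiscrete := by
  have : Nontrivial (MonoidWithZeroHom.valueGroup (.ofClass v)) := by
    refine ⟨⟨1, ⟨Units.mk0 (v π) (hπ ▸ WithZero.coe_ne_zero), ?_⟩, ?_⟩⟩
    · exact MonoidWithZeroHom.mem_valueGroup _ ⟨π, rfl⟩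
    · simpa [Subtype.ext_iff, Units.ext_iff, hπ] using expZ_one_lt_one.ne'
  infer_instance

lemma maximalIdeal_eq_span_of_eq_expZ_one (hπ : v π = expZ 1) :
    IsLocalRing.maximalIdeal v.valuationSubring =
      Ideal.span {⟨π, by rw [mem_valuationSubring_iff, hπ]; exact expZ_one_lt_one.le⟩} := by
  have := isRankOneDiscrete_of_eq_expZ_one hπ
  refine IsUniformizer.is_generator ?_
  -- Mathlib's generator of a discrete `ℤᵐ⁰`-valued valuation is `exp (-1) = expZ 1`
  rw [IsUniformizer, IsRankOneDiscrete.generator_eq_exp_neg_one_of_mem_range ⟨π, hπ⟩]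
  exact hπ

end Valuation

theorem IsLocalRing.associated_of_span_singleton_eq {R : Type*} [CommRing R] [IsLocalRing R]
    {a b : R} (h : Ideal.span {a} = Ideal.span {b}) : Associated a b := by
  obtain ⟨t, rfl⟩ := Ideal.mem_span_singleton'.mp (h ▸ Ideal.mem_span_singleton_self b)
  obtain ⟨s, hs⟩ := Ideal.mem_span_singleton'.mp (h ▸ Ideal.mem_span_singleton_self a)
  by_cases ht : IsUnit t
  · exact ⟨ht.unit, mul_comm _ _⟩
  -- otherwise `1 - s * t` is a unit killing `a`
  have ha : (1 - s * t) * a = 0 := by linear_combination -hs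
  rw [(isUnit_one_sub_self_of_mem_nonunits _ (mul_mem_nonunits_right ht)).mul_right_eq_zero] at ha
  simp [ha]

theorem Module.Basis.range_eq_span_singleton {ι R M : Type*} [Unique ι] [CommRing R]
    [AddCommGroup M] [Module R M] (b : Basis ι R M) (f : M →ₗ[R] R) :
    LinearMap.range f = Ideal.span {f (b default)} := by
  rw [LinearMap.range_eq_map, ← b.span_eq, Set.range_unique, Submodule.map_span,
    Set.image_singleton, Ideal.span]

lemma exists_ne_zero_mIdeal_eq_span (hdisc : ∃ π : K, v π = expZ 1) :
    ∃ ϖ : v.valuationSubring, ϖ ≠ 0 ∧ mIdeal v = Ideal.span {ϖ} := by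
  obtain ⟨π, hπ⟩ := hdisc
  refine ⟨_, fun h ↦ ?_, Valuation.maximalIdeal_eq_span_of_eq_expZ_one hπ⟩
  simp only [ZeroMemClass.zero_def, Subtype.ext_iff] at h
  simp only [h, map_zero] at hπ
  exact WithZero.coe_ne_zero hπ.symm

lemma isLocalRing_resRing {n : ℕ} (hn : 1 ≤ n) : IsLocalRing (ResRing v n) :=
  have : Nontrivial (ResRing v n) := Ideal.Quotient.nontrivial_iff.mpr fun h ↦
    (IsLocalRing.maximalIdeal.isMaximal _).ne_top <|
      top_le_iff.mp (h ▸ Ideal.pow_le_self (by omega))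
  .of_surjective' _ Ideal.Quotient.mk_surjective

variable {v n}

lemma mk_smul_mk (a : v.valuationSubring) (x : mIdeal v) :
    (Ideal.Quotient.mk (mIdeal v ^ n) a) • (Submodule.Quotient.mk x : MModule v n) =
      Submodule.Quotient.mk (a • x) :=
  (mModule_torsion v n).mk_smul a _

lemma epsN_smul (c : ResRing v n) (x : MModule v n) : epsN v n (c • x) = c * epsN v n x := by
  obtain ⟨a, rfl⟩ := Ideal.Quotient.mk_surjective c
  obtain ⟨y, rfl⟩ := Submodule.Quotient.mk_surjective _ x
  rw [mk_smul_mk, Submodule.Quotient.mk_smul, map_smul]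
  rfl

def epsNLinear : MModule v n →ₗ[ResRing v n] ResRing v n where
  toFun := epsN v n
  map_add' := map_add _
  map_smul' := epsN_smul

variable {ϖ : v.valuationSubring}

lemma map_mIdeal_eq_span (hϖ : mIdeal v = Ideal.span {ϖ}) :
    Ideal.map (Ideal.Quotient.mk (mIdeal v ^ n)) (mIdeal v) =
      Ideal.span {Ideal.Quotient.mk (mIdeal v ^ n) ϖ} := by
  conv_lhs => arg 2; rw [hϖ]
  rw [Ideal.map_span, Set.image_singleton]

variable (hϖ : mIdeal v = Ideal.span {ϖ})

def uniformizerClass : MModule v n :=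
  Submodule.Quotient.mk ⟨ϖ, hϖ ▸ Ideal.mem_span_singleton_self ϖ⟩

lemma epsN_uniformizerClass :
    epsN v n (uniformizerClass (n := n) hϖ) = Ideal.Quotient.mk _ ϖ := rfl

lemma bijective_toSpanSingleton_uniformizerClass (hϖ0 : ϖ ≠ 0) :
    Function.Bijective
      (LinearMap.toSpanSingleton (ResRing v n) _ (uniformizerClass (n := n) hϖ)) := by
  constructor
  · rw [← LinearMap.ker_eq_bot, Submodule.eq_bot_iff]
    intro c hc
    obtain ⟨a, rfl⟩ := Ideal.Quotient.mk_surjective c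
    rw [LinearMap.mem_ker, LinearMap.toSpanSingleton_apply, uniformizerClass, mk_smul_mk,
      Submodule.Quotient.mk_eq_zero, Submodule.mem_comap] at hc
    change a * ϖ ∈ _ at hc
    rw [hϖ, Ideal.span_singleton_pow, Ideal.mem_span_singleton, pow_succ] at hc
    rw [Ideal.Quotient.eq_zero_iff_mem, hϖ, Ideal.span_singleton_pow, Ideal.mem_span_singleton]
    exact (mul_dvd_mul_iff_right hϖ0).mp hc
  · intro y
    obtain ⟨⟨x, hx⟩, rfl⟩ := Submodule.Quotient.mk_surjective _ y
    obtain ⟨a, rfl⟩ := Ideal.mem_span_singleton'.mp (hϖ ▸ hx)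
    refine ⟨Ideal.Quotient.mk _ a, ?_⟩
    rw [LinearMap.toSpanSingleton_apply, uniformizerClass, mk_smul_mk]
    rfl

def mModuleBasis (hϖ0 : ϖ ≠ 0) : Module.Basis (Fin 1) (ResRing v n) (MModule v n) :=
  (Module.Basis.singleton (Fin 1) _).map
    (LinearEquiv.ofBijective _ (bijective_toSpanSingleton_uniformizerClass hϖ hϖ0))

lemma mModuleBasis_apply (hϖ0 : ϖ ≠ 0) (i : Fin 1) :
    mModuleBasis (n := n) hϖ hϖ0 i = uniformizerClass hϖ := by
  simp [mModuleBasis]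

/-- Let `K` be a discrete valued field with valuation ring `R_K` and
maximal ideal `𝔪_K`, let `n ≥ 1`, and set `R := R_K/𝔪_K^n`.  Let `M` be a free
`R`-module of rank 1 and `ε : M → R` an `R`-module homomorphism whose image is the
maximal ideal `𝔪_K/𝔪_K^n` of `R`.  Then there is an `R`-module isomorphism
`η : M ≃ 𝔪_K/𝔪_K^{n+1}` with `ε_n ∘ η = ε`; i.e. every Deligne triple of the form
`(R_n(K), M, ε)` is isomorphic to `T_n(K)`. -/
theorem statement14 {K : Type*} [Field K] (v : Valuation K ZM0)
    (hdisc : ∃ π : K, v π = expZ 1) (n : ℕ) (hn : 1 ≤ n)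
    (M : Type*) [AddCommGroup M] [Module (ResRing v n) M]
    (hfree : Nonempty (Module.Basis (Fin 1) (ResRing v n) M))
    (ε : M →ₗ[ResRing v n] ResRing v n)
    (hε : LinearMap.range ε =
      (Ideal.map (Ideal.Quotient.mk ((mIdeal v) ^ n)) (mIdeal v) : Ideal (ResRing v n))) :
    ∃ η : M ≃ₗ[ResRing v n] MModule v n, ∀ x : M, epsN v n (η x) = ε x := by
  obtain ⟨b⟩ := hfree
  obtain ⟨ϖ, hϖ0, hϖ⟩ := exists_ne_zero_mIdeal_eq_span v hdisc
  have := isLocalRing_resRing v hn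
  obtain ⟨u, hu⟩ : Associated (Ideal.Quotient.mk (mIdeal v ^ n) ϖ) (ε (b 0)) :=
    IsLocalRing.associated_of_span_singleton_eq <| by
      rw [← map_mIdeal_eq_span hϖ, ← hε, b.range_eq_span_singleton]; rfl
  let η := b.equiv ((mModuleBasis hϖ hϖ0).unitsSMul fun _ ↦ u) (Equiv.refl _)
  have hη : epsNLinear ∘ₗ η.toLinearMap = ε := b.ext fun i ↦ by
    rw [Subsingleton.elim i 0]
    simp [η, Module.Basis.unitsSMul_apply, mModuleBasis_apply, epsNLinear, Units.smul_def,
      epsN_smul, epsN_uniformizerClass, ← hu, mul_comm]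
  exact ⟨η, LinearMap.congr_fun hη⟩

end Statement14
end
end

section
/- Let K₁ and K₂ be discrete valued fields of mixed characteristic (0, p) with the same ramification index e, let n > e, and let f : R_n(K₁) → R_n(K₂) be a ring homomorphism. Then for any uniformizer π₁ of K₁ and any uniformizer π₂ of K₂, there is a unit u of R_n(K₂) such that f(π₁ + m₁^n) = u · (π₂ + m₂^n); that is, f maps the class of a uniformizer to a generator of the maximal ideal of R_n(K₂). -/
/-! Since `p = π₁ ^ e · (unit)` and `f` fixes `p`, `f(π₁) ^ e` is associated to `π₂ ^ e` in
`R_n(K₂)`. There every nonzero element is associated to a power `π₂ ^ k`, and because `π₂` is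
nilpotent, `π₂ ^ a ∼ π₂ ^ b` with `π₂ ^ b ≠ 0` forces `a = b` (the quotient of the two sides would be
a unit minus a nilpotent). As `e < n`, `π₂ ^ e ≠ 0`, so `f(π₁) ∼ π₂ ^ k` with `k e = e`, i.e. `k = 1`. -/

open Multiplicative WithZero Filter

noncomputable section

section Statement15

set_option synthInstance.maxHeartbeats 1000000
set_option maxHeartbeats 1000000

theorem expZ_le_one {k : ℤ} (hk : 0 ≤ k) : expZ k ≤ (1 : ZM0) := by
  unfold expZ
  rw [← WithZero.coe_one, WithZero.coe_le_coe, ← ofAdd_zero, Multiplicative.ofAdd_le]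
  exact neg_nonpos.mpr hk

variable {K : Type*} [Field K] (v : Valuation K ZM0) (n : ℕ)

section NilpotentGenerator

variable {A : Type*} [CommRing A] {P : A}

theorem pow_eq_zero_of_associated_pow_of_lt (hP : IsNilpotent P) {a b : ℕ} (hab : a < b)
    (h : Associated (P ^ a) (P ^ b)) : P ^ a = 0 := by
  obtain ⟨u, hu⟩ := h
  have hunit : IsUnit ((u : A) + -P ^ (b - a)) :=
    (hP.pow_of_pos (by omega)).neg.isUnit_add_left_of_commute u.isUnit (Commute.all _ _)
  have hkill : P ^ a * ((u : A) + -P ^ (b - a)) = 0 := by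
    rw [mul_add, hu, mul_neg, ← pow_add, Nat.add_sub_cancel' hab.le, add_neg_cancel]
  exact hunit.mul_left_eq_zero.mp hkill

theorem eq_of_associated_pow_pow (hP : IsNilpotent P) {a b : ℕ}
    (h : Associated (P ^ a) (P ^ b)) (hb : P ^ b ≠ 0) : a = b := by
  rcases lt_trichotomy a b with hab | rfl | hba
  · refine absurd ?_ hb
    rw [← Nat.add_sub_cancel' hab.le, pow_add, pow_eq_zero_of_associated_pow_of_lt hP hab h,
      zero_mul]
  · rfl
  · exact absurd (pow_eq_zero_of_associated_pow_of_lt hP hba h.symm) hb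

theorem associated_of_associated_pow_pow (hP : IsNilpotent P)
    (hgen : ∀ z : A, z ≠ 0 → ∃ k : ℕ, Associated (P ^ k) z) {x : A} {e : ℕ} (he : 0 < e)
    (hPe : P ^ e ≠ 0) (h : Associated (x ^ e) (P ^ e)) : Associated P x := by
  have hx : x ≠ 0 := by
    rintro rfl
    exact hPe (h.eq_zero_iff.mp (zero_pow he.ne'))
  obtain ⟨k, hk⟩ := hgen x hx
  have hke : k * e = e := eq_of_associated_pow_pow hP (pow_mul P k e ▸ hk.pow_pow.trans h) hPe
  obtain rfl : k = 1 := Nat.eq_of_mul_eq_mul_right he (by rw [hke, one_mul])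
  simpa using hk

end NilpotentGenerator

theorem expZ_eq_exp (k : ℤ) : expZ k = exp (-k) := rfl

theorem expZ_zero : expZ 0 = 1 := by
  simp [expZ_eq_exp]

theorem expZ_le_expZ {a b : ℤ} : expZ a ≤ expZ b ↔ b ≤ a := by
  rw [expZ_eq_exp, expZ_eq_exp, exp_le_exp, neg_le_neg_iff]

theorem expZ_one_pow (k : ℕ) : expZ 1 ^ k = expZ k := by
  simp [expZ_eq_exp, ← exp_nsmul]

theorem le_expZ_one_of_lt_one {x : ZM0} (hx : x < 1) : x ≤ expZ 1 := by
  rwa [expZ_eq_exp, ← lt_mul_exp_iff_le exp_ne_zero, ← exp_add, neg_add_cancel, exp_zero]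

section Uniformizer

variable {v} {n} {π : v.valuationSubring}

theorem valuation_uniformizer_pow (hπ : v (π : K) = expZ 1) (k : ℕ) :
    v ((π ^ k : v.valuationSubring) : K) = expZ k := by
  rw [SubmonoidClass.coe_pow, map_pow, hπ, expZ_one_pow]

theorem mIdeal_eq_span_uniformizer (hπ : v (π : K) = expZ 1) : mIdeal v = Ideal.span {π} := by
  ext b
  rw [mIdeal, IsLocalRing.mem_maximalIdeal, mem_nonunits_iff, Ideal.mem_span_singleton,
    (Valuation.valuationSubring.integers v).isUnit_iff_valuation_eq_one,
    ← (Valuation.valuationSubring.integers v).le_iff_dvd]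
  change ¬ v (b : K) = 1 ↔ v (b : K) ≤ v (π : K)
  rw [hπ]
  refine ⟨fun hb ↦ le_expZ_one_of_lt_one (lt_of_le_of_ne b.2 hb), fun hb hb1 ↦ ?_⟩
  rw [hb1, ← expZ_zero, expZ_le_expZ] at hb
  omega

theorem mem_mIdeal_pow_iff (hπ : v (π : K) = expZ 1) {k : ℕ} {a : v.valuationSubring} :
    a ∈ mIdeal v ^ k ↔ v (a : K) ≤ expZ k := by
  rw [mIdeal_eq_span_uniformizer hπ, Ideal.span_singleton_pow, Ideal.mem_span_singleton,
    ← (Valuation.valuationSubring.integers v).le_iff_dvd, ← valuation_uniformizer_pow hπ]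
  rfl

theorem associated_of_valuation_eq {a b : v.valuationSubring} (h : v (a : K) = v (b : K)) :
    Associated a b :=
  associated_of_dvd_dvd ((Valuation.valuationSubring.integers v).dvd_of_le h.ge)
    ((Valuation.valuationSubring.integers v).dvd_of_le h.le)

theorem exists_associated_uniformizer_pow (hπ : v (π : K) = expZ 1) {a : v.valuationSubring}
    (ha : a ≠ 0) : ∃ k : ℕ, Associated (π ^ k) a := by
  have hva : v (a : K) ≠ 0 := by simpa using ha
  have hlog : log (v (a : K)) ≤ 0 := (log_le_iff_le_exp hva).mpr (by rw [exp_zero]; exact a.2)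
  refine ⟨(-log (v (a : K))).toNat, associated_of_valuation_eq ?_⟩
  rw [valuation_uniformizer_pow hπ, expZ_eq_exp, Int.toNat_of_nonneg (by omega), neg_neg,
    exp_log hva]

theorem isNilpotent_mk_uniformizer (hπ : v (π : K) = expZ 1) :
    IsNilpotent (Ideal.Quotient.mk (mIdeal v ^ n) π) := by
  refine ⟨n, ?_⟩
  rw [← map_pow, Ideal.Quotient.eq_zero_iff_mem]
  exact Ideal.pow_mem_pow (mIdeal_eq_span_uniformizer hπ ▸ Ideal.mem_span_singleton_self π) n

theorem mk_uniformizer_pow_ne_zero (hπ : v (π : K) = expZ 1) {k : ℕ} (hk : k < n) :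
    Ideal.Quotient.mk (mIdeal v ^ n) π ^ k ≠ 0 := by
  rw [← map_pow, Ne, Ideal.Quotient.eq_zero_iff_mem, mem_mIdeal_pow_iff hπ,
    valuation_uniformizer_pow hπ, expZ_le_expZ]
  omega

theorem exists_associated_mk_uniformizer_pow (hπ : v (π : K) = expZ 1) {z : ResRing v n}
    (hz : z ≠ 0) : ∃ k : ℕ, Associated (Ideal.Quotient.mk (mIdeal v ^ n) π ^ k) z := by
  obtain ⟨a, rfl⟩ := Ideal.Quotient.mk_surjective (I := mIdeal v ^ n) z
  obtain ⟨k, hk⟩ := exists_associated_uniformizer_pow hπ (a := a) (by rintro rfl; simp at hz)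
  exact ⟨k, map_pow (Ideal.Quotient.mk (mIdeal v ^ n)) π k ▸ hk.map _⟩

theorem associated_mk_uniformizer_pow_natCast (hπ : v (π : K) = expZ 1) {p e : ℕ}
    (hvp : v (p : K) = expZ e) :
    Associated (Ideal.Quotient.mk (mIdeal v ^ n) π ^ e) (p : ResRing v n) := by
  have h : Associated (π ^ e) (p : v.valuationSubring) :=
    associated_of_valuation_eq (by rw [valuation_uniformizer_pow hπ, ← hvp]; rfl)
  simpa only [map_pow, map_natCast] using h.map (Ideal.Quotient.mk (mIdeal v ^ n))

end Uniformizer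

/-- Let `K₁`, `K₂` be discrete valued fields of mixed characteristic
`(0,p)` with the same ramification index `e`, let `n > e`, and `f : R_n(K₁) → R_n(K₂)`
a ring homomorphism.  Then for any uniformizers `π₁` of `K₁` and `π₂` of `K₂` there is a
unit `u` of `R_n(K₂)` with `f(π₁ + 𝔪₁^n) = u ⬝ (π₂ + 𝔪₂^n)`. -/
theorem statement15 {K₁ K₂ : Type*} [Field K₁] [Field K₂]
    (v₁ : Valuation K₁ ZM0) (v₂ : Valuation K₂ ZM0) (p e n : ℕ) (he : 0 < e) (hn : e < n)
    -- mixed characteristic (0,p) with ramification index e (ν(p) = e):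
    (hvp₁ : v₁ (p : K₁) = expZ (e : ℤ)) (hvp₂ : v₂ (p : K₂) = expZ (e : ℤ))
    (f : ResRing v₁ n →+* ResRing v₂ n) :
    ∀ (π₁ : K₁) (π₂ : K₂) (h₁ : v₁ π₁ = expZ 1) (h₂ : v₂ π₂ = expZ 1),
      ∃ u : (ResRing v₂ n)ˣ,
        f (Ideal.Quotient.mk _ ⟨π₁, (Valuation.mem_valuationSubring_iff _ _).mpr
            (h₁ ▸ expZ_le_one (by norm_num))⟩) =
          (u : ResRing v₂ n) *
            Ideal.Quotient.mk _ ⟨π₂, (Valuation.mem_valuationSubring_iff _ _).mpr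
              (h₂ ▸ expZ_le_one (by norm_num))⟩ := by
  intro π₁ π₂ h₁ h₂
  lift π₁ to v₁.valuationSubring using h₁.trans_le (expZ_le_one zero_le_one)
  lift π₂ to v₂.valuationSubring using h₂.trans_le (expZ_le_one zero_le_one)
  have hpow : Associated (f (Ideal.Quotient.mk _ π₁) ^ e) (Ideal.Quotient.mk _ π₂ ^ e) := by
    have h := (associated_mk_uniformizer_pow_natCast (n := n) h₁ hvp₁).map f
    rw [map_pow, map_natCast] at h
    exact h.trans (associated_mk_uniformizer_pow_natCast h₂ hvp₂).symm
  obtain ⟨u, hu⟩ := associated_of_associated_pow_pow (isNilpotent_mk_uniformizer h₂)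
    (fun _ ↦ exists_associated_mk_uniformizer_pow h₂) he (mk_uniformizer_pow_ne_zero h₂ hn) hpow
  exact ⟨u, by rw [← hu, mul_comm]⟩

end Statement15
end
end
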